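/- arXiv:1211.0419 — 2 statements merged into one kernel-verified Lean document; each statement's English description precedes it below -/
import Mathlib

section
/- Let (Aᵢ)ᵢ∈I be a family of subsets of Y with each ∅ ≠ Cl₊Aᵢ ≠ Y and ∅ ≠ Cl₊(⋃ᵢ Aᵢ) ≠ Y. Then Inf(⋃ᵢ Aᵢ) = Inf(⋃ᵢ Inf Aᵢ). -/
open Set Pointwise

variable {Y : Type*} [AddCommGroup Y] [Module ℝ Y] [TopologicalSpace Y]
  [IsTopologicalAddGroup Y] [ContinuousSMul ℝ Y]

/-- Upper closure of a set with respect to the cone `C`. -/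
def upClo (C A : Set Y) : Set Y := closure (A + C)

/-- Weakly minimal elements of `A` with respect to the cone `C`. -/
def wMinSet (C A : Set Y) : Set Y := {y ∈ A | ({y} - interior C) ∩ A = ∅}

/-- Infimal set of `A` with respect to the cone `C`. -/
def infSet (C A : Set Y) : Set Y := wMinSet C (upClo C A)

/-!
Both sides are the weakly minimal points of an upper closure, and `Cl₊` commutes with unions up to
closure, so it suffices that `Cl₊(Inf A) = Cl₊ A` whenever `Cl₊ A ≠ Y`. For `y ∈ D := Cl₊ A` and
`c ∈ Int C`, moving from `y` along `-c` as far as the closed set `D` allows (a bounded distance,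
since `D ≠ Y` and `D + C ⊆ D`) lands on a weakly minimal point `w = y - t₀ c`, and `y` is the limit
of the points `w + s c ∈ Inf A + C` as `s ↓ t₀`.
-/

open Filter Topology

lemma Convex.add_mem_of_smul_subset {E : Type*} [AddCommGroup E] [Module ℝ E] {C : Set E}
    (hC : Convex ℝ C) (hCone : ∀ r : ℝ, 0 < r → r • C ⊆ C)
    {a b : E} (ha : a ∈ C) (hb : b ∈ C) : a + b ∈ C := by
  have hmid : (1 / 2 : ℝ) • a + (1 / 2 : ℝ) • b ∈ C :=
    hC ha hb (by norm_num) (by norm_num) (by norm_num)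
  have h := hCone 2 two_pos (smul_mem_smul_set hmid)
  rwa [smul_add, smul_smul, smul_smul, show (2 : ℝ) * (1 / 2) = 1 by norm_num, one_smul,
    one_smul] at h

section Cone

variable {C D : Set Y}

omit [ContinuousSMul ℝ Y] in
lemma upClo_add_mem (hC : Convex ℝ C) (hCone : ∀ r : ℝ, 0 < r → r • C ⊆ C) {A : Set Y}
    {d k : Y} (hd : d ∈ upClo C A) (hk : k ∈ C) : d + k ∈ upClo C A := by
  have : MapsTo (· + k) (A + C) (A + C) := by
    rintro _ ⟨a, ha, c, hc, rfl⟩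
    exact ⟨a, ha, c + k, hC.add_mem_of_smul_subset hCone hc hk, (add_assoc a c k).symm⟩
  exact map_mem_closure (f := (· + k)) (continuous_add_const k) hd this

/-- `C - c` is a neighbourhood of `0`, hence absorbs `z - y` for a point `z ∉ D`; so for large `t`
we would get `z ∈ (y - t • c) + C`. -/
lemma bddAbove_setOf_sub_smul_mem (hCone : ∀ r : ℝ, 0 < r → r • C ⊆ C) {c : Y}
    (hc : c ∈ interior C) (hDC : ∀ d ∈ D, ∀ k ∈ C, d + k ∈ D) (hD : D ≠ univ) (y : Y) :
    BddAbove {t : ℝ | y - t • c ∈ D} := by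
  obtain ⟨z, hz⟩ := (ne_univ_iff_exists_notMem D).1 hD
  have hnhds : (· + c) ⁻¹' C ∈ 𝓝 (0 : Y) :=
    (continuous_add_const c).continuousAt.preimage_mem_nhds
      (by simpa using mem_interior_iff_mem_nhds.1 hc)
  have habs : ∀ᶠ t : ℝ in atTop, 0 < t ∧ {z - y} ⊆ t • ((· + c) ⁻¹' C) :=
    (eventually_gt_atTop (0 : ℝ)).and <|
      IsOrderBornology.atTop_le_cobounded (α := ℝ) (absorbent_nhds_zero hnhds (z - y))
  obtain ⟨T, hT⟩ := eventually_atTop.1 habs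
  refine ⟨T, fun t ht => le_of_not_gt fun hTt => hz ?_⟩
  obtain ⟨htpos, hsub⟩ := hT t hTt.le
  obtain ⟨v, hv, hvt : t • v = z - y⟩ := hsub rfl
  have hmem : t • (v + c) ∈ C := hCone t htpos (smul_mem_smul_set hv)
  have hz_eq : y - t • c + t • (v + c) = z := by rw [smul_add, hvt]; abel
  simpa only [hz_eq] using hDC _ ht _ hmem

/-- Take the largest `t` with `y - t • c ∈ D`: if `y - t • c - c' ∈ D` with `c' ∈ interior C`, then
`c' - ε • c ∈ C` for small `ε > 0` and `t + ε` would also be admissible. -/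
lemma exists_sub_smul_mem_wMinSet (hCone : ∀ r : ℝ, 0 < r → r • C ⊆ C) {c : Y}
    (hc : c ∈ interior C) (hDcl : IsClosed D) (hDC : ∀ d ∈ D, ∀ k ∈ C, d + k ∈ D)
    (hD : D ≠ univ) {y : Y} (hy : y ∈ D) : ∃ t ≥ (0 : ℝ), y - t • c ∈ wMinSet C D := by
  set S := {t : ℝ | y - t • c ∈ D}
  have hS0 : (0 : ℝ) ∈ S := by simpa [S] using hy
  have hSbdd := bddAbove_setOf_sub_smul_mem hCone hc hDC hD y
  have hSsup : sSup S ∈ S :=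
    (hDcl.preimage (by fun_prop)).csSup_mem ⟨0, hS0⟩ hSbdd
  refine ⟨sSup S, le_csSup hSbdd hS0, hSsup, eq_empty_iff_forall_notMem.2 ?_⟩
  rintro _ ⟨⟨_, rfl, c', hc', rfl⟩, hxD⟩
  have hev : ∀ᶠ ε in 𝓝[>] (0 : ℝ), c' - ε • c ∈ C :=
    nhdsWithin_le_nhds <| (Continuous.tendsto (by fun_prop) 0).eventually
      (mem_interior_iff_mem_nhds.1 (by simpa using hc'))
  obtain ⟨ε, hεC, hεpos⟩ := (hev.and self_mem_nhdsWithin).exists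
  have hmem : sSup S + ε ∈ S := by
    have h := hDC _ hxD _ hεC
    rwa [show y - sSup S • c - c' + (c' - ε • c) = y - (sSup S + ε) • c by
      rw [add_smul]; abel] at h
  linarith [le_csSup hSbdd hmem, show (0 : ℝ) < ε from hεpos]

lemma subset_closure_wMinSet_add (hCone : ∀ r : ℝ, 0 < r → r • C ⊆ C)
    (hInt : (interior C).Nonempty) (hDcl : IsClosed D) (hDC : ∀ d ∈ D, ∀ k ∈ C, d + k ∈ D)
    (hD : D ≠ univ) : D ⊆ closure (wMinSet C D + C) := by
  intro y hy
  obtain ⟨c, hc⟩ := hInt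
  obtain ⟨t, ht, hw⟩ := exists_sub_smul_mem_wMinSet hCone hc hDcl hDC hD hy
  have hcont : Continuous fun s : ℝ => y - t • c + s • c := by fun_prop
  have hlim : Tendsto (fun s : ℝ => y - t • c + s • c) (𝓝[>] t) (𝓝 y) := by
    simpa using (hcont.tendsto t).mono_left nhdsWithin_le_nhds
  refine mem_closure_of_tendsto hlim (eventually_nhdsWithin_of_forall fun s hs => ?_)
  exact add_mem_add hw (hCone s (ht.trans_lt hs) (smul_mem_smul_set (interior_subset hc)))

lemma upClo_infSet (hC : Convex ℝ C) (hCone : ∀ r : ℝ, 0 < r → r • C ⊆ C)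
    (hInt : (interior C).Nonempty) {A : Set Y} (hA : upClo C A ≠ univ) :
    upClo C (infSet C A) = upClo C A := by
  refine subset_antisymm (closure_minimal ?_ isClosed_closure) ?_
  · rintro _ ⟨w, hw, k, hk, rfl⟩
    exact upClo_add_mem hC hCone hw.1 hk
  · exact subset_closure_wMinSet_add hCone hInt isClosed_closure
      (fun _ hd _ hk => upClo_add_mem hC hCone hd hk) hA

end Cone

omit [Module ℝ Y] [IsTopologicalAddGroup Y] [ContinuousSMul ℝ Y] in
lemma upClo_iUnion {ι : Type*} (C : Set Y) (s : ι → Set Y) :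
    upClo C (⋃ i, s i) = closure (⋃ i, upClo C (s i)) := by
  rw [upClo, iUnion_add]
  exact subset_antisymm (closure_mono (iUnion_mono fun i => subset_closure))
    (closure_minimal (iUnion_subset fun i => closure_mono (subset_iUnion (fun i => s i + C) i))
      isClosed_closure)

theorem stmt_10_general {ι : Type*} (C : Set Y) (hC : Convex ℝ C)
    (hCone : ∀ r : ℝ, 0 < r → r • C ⊆ C)
    (hInt : (interior C).Nonempty)
    (A : ι → Set Y)
    (hAi : ∀ i, (upClo C (A i)).Nonempty ∧ upClo C (A i) ≠ univ) :
    infSet C (⋃ i, A i) = infSet C (⋃ i, infSet C (A i)) := by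
  have hUpClo : upClo C (⋃ i, infSet C (A i)) = upClo C (⋃ i, A i) := by
    simp only [upClo_iUnion, upClo_infSet hC hCone hInt (hAi _).2]
  rw [infSet, infSet, hUpClo]

theorem stmt_10 {ι : Type*} (C : Set Y) (hC : Convex ℝ C)
    (hCone : ∀ r : ℝ, 0 < r → r • C ⊆ C)
    (hInt : (interior C).Nonempty) (hIntNe : interior C ≠ univ)
    (A : ι → Set Y)
    (hAi : ∀ i, (upClo C (A i)).Nonempty ∧ upClo C (A i) ≠ univ)
    (hU1 : (upClo C (⋃ i, A i)).Nonempty) (hU2 : upClo C (⋃ i, A i) ≠ univ) :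
    infSet C (⋃ i, A i) = infSet C (⋃ i, infSet C (A i)) :=
  stmt_10_general C hC hCone hInt A hAi
end

section
/- The relation A ≼ B :⇔ Cl₊A ⊇ Cl₊B defines a partial order on the set I of self-infimal subsets of Y (sets A with A = Inf A), and (I, ≼) is a complete lattice; moreover for every nonempty family 𝒜 ⊆ I, the infimum of 𝒜 is Inf(⋃_{A∈𝒜} A). -/
open Set Pointwise
open scoped Classical

/-- The extended space `Y ∪ {-∞, +∞}`. -/
abbrev EY (Y : Type*) := WithBot (WithTop Y)

/-- Embedding of `Y` into the extended space. -/
def toE {Y : Type*} (y : Y) : EY Y := ((y : WithTop Y) : EY Y)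

/-- The element `+∞` of the extended space. -/
def posInf (Y : Type*) : EY Y := ((⊤ : WithTop Y) : EY Y)

variable {Y : Type*} [AddCommGroup Y] [Module ℝ Y] [TopologicalSpace Y]
  [IsTopologicalAddGroup Y] [ContinuousSMul ℝ Y]

/-- Weakly maximal elements with respect to the cone `C`. -/
def wMaxSet (C A : Set Y) : Set Y := {y ∈ A | ({y} + interior C) ∩ A = ∅}

/-- Upper closure (w.r.t. `C`) of a subset of the extended space. -/
noncomputable def upCloE (C : Set Y) (A : Set (EY Y)) : Set Y :=
  if (⊥ : EY Y) ∈ A then univ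
  else if A = {posInf Y} then ∅
  else closure (toE ⁻¹' A + C)

/-- Infimal set (w.r.t. `C`) of a subset of the extended space. -/
noncomputable def infSE (C : Set Y) (A : Set (EY Y)) : Set (EY Y) :=
  if upCloE C A = univ then {⊥}
  else if upCloE C A = ∅ then {posInf Y}
  else toE '' wMinSet C (upCloE C A)

/-- Lower closure (w.r.t. `C`) of a subset of the extended space. -/
noncomputable def loCloE (C : Set Y) (A : Set (EY Y)) : Set Y :=
  if posInf Y ∈ A then univ
  else if A = {(⊥ : EY Y)} then ∅
  else closure (toE ⁻¹' A - C)

/-- Supremal set (w.r.t. `C`) of a subset of the extended space. -/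
noncomputable def supSE (C : Set Y) (A : Set (EY Y)) : Set (EY Y) :=
  if loCloE C A = univ then {posInf Y}
  else if loCloE C A = ∅ then {(⊥ : EY Y)}
  else toE '' wMaxSet C (loCloE C A)

/-!
Every closed set `F ≠ Y` with `F + C ⊆ F` is recovered from its weakly minimal points:
`F = cl (wMin F + C)`. Indeed, for `y ∈ F` and `c ∈ int C`, the ray `y - t • c` leaves `F` for
large `t` (otherwise `F = Y`, since `c ∈ int C` absorbs every direction), and its last point
`w = y - s • c` in `F` is weakly minimal, so `y = w + s • c ∈ wMin F + cl C`. Hence `Inf A` has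
the same upper closure as `A`, so `Inf A` is self-infimal and `A ↦ Cl₊ A` is an order embedding
of `(I, ≼)` into the dual of `Set Y`. Infima then come from unions: `Cl₊ (⋃ 𝒜)` is the smallest
closed upper set containing every `Cl₊ A`, `A ∈ 𝒜`, and `Inf (⋃ 𝒜)` is the self-infimal set with
that upper closure.
-/

open Filter Topology

lemma toE_injective {X : Type*} : Function.Injective (toE (Y := X)) :=
  fun _ _ h => by simpa [toE] using h

lemma toE_ne_bot {X : Type*} (x : X) : toE x ≠ ⊥ := by simp [toE]

lemma toE_ne_posInf {X : Type*} (x : X) : toE x ≠ posInf X := by simp [toE, posInf]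

lemma bot_ne_posInf {X : Type*} : (⊥ : EY X) ≠ posInf X := WithBot.bot_ne_coe

lemma closure_add_closure_subset {G : Type*} [Add G] [TopologicalSpace G] [ContinuousAdd G]
    (s t : Set G) : closure s + closure t ⊆ closure (s + t) := by
  rintro _ ⟨a, ha, b, hb, rfl⟩
  exact map_mem_closure₂ continuous_add ha hb fun a ha b hb => add_mem_add ha hb

section ConvexCone

variable {E : Type*} [AddCommGroup E] [Module ℝ E] {C : Set E}

lemma Convex.add_subset_of_smul_subset (hC : Convex ℝ C)
    (hCone : ∀ r : ℝ, 0 < r → r • C ⊆ C) : C + C ⊆ C := by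
  rintro _ ⟨a, ha, b, hb, rfl⟩
  have hmid : (2⁻¹ : ℝ) • a + (2⁻¹ : ℝ) • b ∈ C := hC ha hb (by norm_num) (by norm_num) (by norm_num)
  have := hCone 2 two_pos (smul_mem_smul_set hmid)
  rwa [smul_add, smul_smul, smul_smul, mul_inv_cancel₀ two_ne_zero, one_smul, one_smul] at this

lemma smul_mem_closure_of_nonneg [TopologicalSpace E] [ContinuousSMul ℝ E]
    (hCone : ∀ r : ℝ, 0 < r → r • C ⊆ C) {c : E} (hc : c ∈ C) {s : ℝ} (hs : 0 ≤ s) :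
    s • c ∈ closure C := by
  have hlim : Tendsto (fun t : ℝ => t • c) (𝓝[>] s) (𝓝 (s • c)) :=
    (continuous_id.smul continuous_const).continuousWithinAt
  exact mem_closure_of_tendsto hlim <| eventually_nhdsWithin_of_forall fun t (ht : s < t) =>
    hCone t (hs.trans_lt ht) (smul_mem_smul_set hc)

end ConvexCone

section WeakMinimality

variable {C F : Set Y} {c : Y}

lemma eventually_add_smul_mem (hCone : ∀ r : ℝ, 0 < r → r • C ⊆ C) (hc : c ∈ interior C)
    (v : Y) : ∀ᶠ t : ℝ in atTop, v + t • c ∈ C := by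
  have hlim : Tendsto (fun t : ℝ => t⁻¹ • v + c) atTop (𝓝 c) := by
    simpa using ((tendsto_inv_atTop_zero (𝕜 := ℝ)).smul_const v).add_const c
  filter_upwards [hlim.eventually_mem (mem_interior_iff_mem_nhds.mp hc), eventually_gt_atTop 0]
    with t ht htpos
  have := hCone t htpos (smul_mem_smul_set ht)
  rwa [smul_add, smul_smul, mul_inv_cancel₀ htpos.ne', one_smul] at this

lemma bddAbove_sub_smul_mem (hCone : ∀ r : ℝ, 0 < r → r • C ⊆ C) (hc : c ∈ interior C)
    (hFC : F + C ⊆ F) (hne : F ≠ univ) (y : Y) : BddAbove {t : ℝ | y - t • c ∈ F} := by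
  by_contra hunb
  refine hne (eq_univ_of_forall fun z => ?_)
  obtain ⟨t₀, ht₀⟩ := (eventually_add_smul_mem hCone hc (z - y)).exists_forall_of_atTop
  obtain ⟨t, htF, ht⟩ := not_bddAbove_iff.mp hunb t₀
  convert hFC (add_mem_add htF (ht₀ t ht.le)) using 1
  abel

lemma sub_smul_mem_wMinSet (hFC : F + C ⊆ F) {y : Y} {s : ℝ}
    (hs : y - s • c ∈ F) (hmax : ∀ t, y - t • c ∈ F → t ≤ s) : y - s • c ∈ wMinSet C F := by
  refine ⟨hs, eq_empty_of_forall_notMem ?_⟩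
  rintro _ ⟨⟨_, rfl, d, hd, rfl⟩, hdF⟩
  have hlim : Tendsto (fun ε : ℝ => d - ε • c) (𝓝[>] 0) (𝓝 d) :=
    tendsto_nhdsWithin_of_tendsto_nhds <|
      (by fun_prop : Continuous fun ε : ℝ => d - ε • c).tendsto' 0 d (by simp)
  obtain ⟨ε, hεC, hε⟩ := ((hlim.eventually_mem (mem_interior_iff_mem_nhds.mp hd)).and
    self_mem_nhdsWithin).exists
  have hstep : y - (s + ε) • c ∈ F := by
    convert hFC (add_mem_add hdF hεC) using 1
    simp only [add_smul]
    abel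
  linarith [hmax _ hstep, show (0 : ℝ) < ε from hε]

lemma closure_wMinSet_add (hCone : ∀ r : ℝ, 0 < r → r • C ⊆ C) (hInt : (interior C).Nonempty)
    (hF : IsClosed F) (hFC : F + C ⊆ F) (hne : F ≠ univ) : closure (wMinSet C F + C) = F := by
  obtain ⟨c, hc⟩ := hInt
  refine (closure_minimal ((add_subset_add_right fun _ h => h.1).trans hFC) hF).antisymm
    fun y hy => ?_
  set T := {t : ℝ | y - t • c ∈ F}
  have h0T : (0 : ℝ) ∈ T := by simpa [T] using hy
  have hbdd : BddAbove T := bddAbove_sub_smul_mem hCone hc hFC hne y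
  have hsT : sSup T ∈ T := (hF.preimage (by fun_prop)).csSup_mem ⟨0, h0T⟩ hbdd
  have hw := sub_smul_mem_wMinSet hFC hsT fun t ht => le_csSup hbdd ht
  rw [← sub_add_cancel y (sSup T • c)]
  exact closure_add_closure_subset _ _ <| add_mem_add (subset_closure hw) <|
    smul_mem_closure_of_nonneg hCone (interior_subset hc) (le_csSup hbdd h0T)

end WeakMinimality

section UpperClosure

variable {X : Type*} [AddCommGroup X] [TopologicalSpace X] {C : Set X}

lemma isClosed_upCloE (A : Set (EY X)) : IsClosed (upCloE C A) := by
  unfold upCloE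
  split_ifs
  exacts [isClosed_univ, isClosed_empty, isClosed_closure]

lemma upCloE_of_bot_mem {A : Set (EY X)} (h : ⊥ ∈ A) : upCloE C A = univ := if_pos h

lemma preimage_add_subset_upCloE (A : Set (EY X)) : toE ⁻¹' A + C ⊆ upCloE C A := by
  unfold upCloE
  split_ifs with hbot hpos
  · exact subset_univ _
  · have : toE ⁻¹' A = ∅ := eq_empty_of_forall_notMem fun y hy =>
      toE_ne_posInf y (by rwa [hpos] at hy)
    simp [this]
  · exact subset_closure

lemma upCloE_subset_of_bot_notMem {A : Set (EY X)} {F : Set X} (hbot : ⊥ ∉ A) (hF : IsClosed F)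
    (h : toE ⁻¹' A + C ⊆ F) : upCloE C A ⊆ F := by
  rw [upCloE, if_neg hbot]
  split_ifs
  exacts [empty_subset _, closure_minimal h hF]

lemma upCloE_mono {A B : Set (EY X)} (hAB : A ⊆ B) : upCloE C A ⊆ upCloE C B := by
  by_cases hbB : ⊥ ∈ B
  · exact (upCloE_of_bot_mem hbB).symm ▸ subset_univ _
  exact upCloE_subset_of_bot_notMem (fun h => hbB (hAB h)) (isClosed_upCloE B)
    ((add_subset_add_right (preimage_mono hAB)).trans (preimage_add_subset_upCloE B))

lemma upCloE_iUnion_subset {ι : Sort*} {f : ι → Set (EY X)} {B : Set (EY X)}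
    (h : ∀ i, upCloE C (f i) ⊆ upCloE C B) : upCloE C (⋃ i, f i) ⊆ upCloE C B := by
  by_cases hbot : ⊥ ∈ ⋃ i, f i
  · obtain ⟨i, hi⟩ := mem_iUnion.mp hbot
    simpa [upCloE_of_bot_mem hbot, upCloE_of_bot_mem hi] using h i
  refine upCloE_subset_of_bot_notMem hbot (isClosed_upCloE B) ?_
  rintro _ ⟨y, hy, d, hd, rfl⟩
  obtain ⟨i, hi⟩ := mem_iUnion.mp hy
  exact h i (preimage_add_subset_upCloE (f i) (add_mem_add hi hd))

lemma upCloE_add_subset [Module ℝ X] [ContinuousAdd X] (hC : Convex ℝ C)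
    (hCone : ∀ r : ℝ, 0 < r → r • C ⊆ C) (A : Set (EY X)) : upCloE C A + C ⊆ upCloE C A := by
  unfold upCloE
  split_ifs
  · exact subset_univ _
  · simp
  · calc closure (toE ⁻¹' A + C) + C ⊆ closure (toE ⁻¹' A + C + C) :=
          (add_subset_add_left subset_closure).trans (closure_add_closure_subset _ _)
      _ ⊆ closure (toE ⁻¹' A + C) := by
          rw [add_assoc]
          exact closure_mono (add_subset_add_left (hC.add_subset_of_smul_subset hCone))

lemma upCloE_image (W : Set X) : upCloE C (toE '' W) = closure (W + C) := by
  have hbot : (⊥ : EY X) ∉ toE '' W := fun ⟨y, _, hy⟩ => toE_ne_bot y hy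
  have hpos : toE '' W ≠ {posInf X} := fun h => by
    obtain ⟨y, _, hy⟩ := h.symm ▸ mem_singleton (posInf X)
    exact toE_ne_posInf y hy
  rw [upCloE, if_neg hbot, if_neg hpos, preimage_image_eq _ toE_injective]

lemma upCloE_singleton_posInf : upCloE C ({posInf X} : Set (EY X)) = ∅ := by
  rw [upCloE, if_neg (by simpa using bot_ne_posInf), if_pos rfl]

lemma infSE_eq_of_upCloE_eq {A B : Set (EY X)} (h : upCloE C A = upCloE C B) :
    infSE C A = infSE C B := by
  rw [infSE, infSE, h]

end UpperClosure

lemma upCloE_infSE {C : Set Y} (hC : Convex ℝ C) (hCone : ∀ r : ℝ, 0 < r → r • C ⊆ C)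
    (hInt : (interior C).Nonempty) (A : Set (EY Y)) : upCloE C (infSE C A) = upCloE C A := by
  unfold infSE
  split_ifs with huniv hempty
  · rw [upCloE_of_bot_mem (mem_singleton _), huniv]
  · rw [upCloE_singleton_posInf, hempty]
  · rw [upCloE_image]
    exact closure_wMinSet_add hCone hInt (isClosed_upCloE A) (upCloE_add_subset hC hCone A) huniv

section SelfInfimal

/-- The set `I` of the paper. -/
abbrev SelfInfimal (C : Set Y) := {A : Set (EY Y) // A = infSE C A}

/-- `A ≼ B` iff `Cl₊ B ⊆ Cl₊ A`. -/
@[reducible]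
def SelfInfimal.partialOrder (C : Set Y) : PartialOrder (SelfInfimal C) :=
  PartialOrder.lift (fun A => OrderDual.toDual (upCloE C A.1)) fun A B h =>
    Subtype.ext (A.2.trans ((infSE_eq_of_upCloE_eq h).trans B.2.symm))

variable {C : Set Y}

@[reducible]
noncomputable def SelfInfimal.completeLattice (hC : Convex ℝ C)
    (hCone : ∀ r : ℝ, 0 < r → r • C ⊆ C) (hInt : (interior C).Nonempty) :
    CompleteLattice (SelfInfimal C) :=
  letI := SelfInfimal.partialOrder C
  letI : InfSet (SelfInfimal C) := ⟨fun 𝒜 => ⟨infSE C (⋃ A ∈ 𝒜, A.1),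
    (infSE_eq_of_upCloE_eq (upCloE_infSE hC hCone hInt _)).symm⟩⟩
  completeLatticeOfInf _ fun 𝒜 => by
    refine ⟨fun A hA => ?_, fun B hB => ?_⟩
    · change upCloE C A.1 ⊆ upCloE C (infSE C (⋃ B ∈ 𝒜, B.1))
      rw [upCloE_infSE hC hCone hInt]
      exact upCloE_mono (subset_biUnion_of_mem hA)
    · change upCloE C (infSE C (⋃ A ∈ 𝒜, A.1)) ⊆ upCloE C B.1
      rw [upCloE_infSE hC hCone hInt, biUnion_eq_iUnion]
      exact upCloE_iUnion_subset fun A => hB A.2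

end SelfInfimal

theorem stmt_12_general (C : Set Y) (hC : Convex ℝ C)
    (hCone : ∀ r : ℝ, 0 < r → r • C ⊆ C)
    (hInt : (interior C).Nonempty) :
    ∃ L : CompleteLattice {A : Set (EY Y) // A = infSE C A},
      (∀ A B : {A : Set (EY Y) // A = infSE C A},
        L.le A B ↔ upCloE C (B : Set (EY Y)) ⊆ upCloE C (A : Set (EY Y))) ∧
      ∀ 𝒜 : Set {A : Set (EY Y) // A = infSE C A}, 𝒜.Nonempty →
        ((L.sInf 𝒜 : {A : Set (EY Y) // A = infSE C A}) : Set (EY Y)) =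
          infSE C (⋃ A ∈ 𝒜, (A : Set (EY Y))) :=
  ⟨SelfInfimal.completeLattice hC hCone hInt, fun _ _ => Iff.rfl, fun _ _ => rfl⟩

theorem stmt_12 (C : Set Y) (hC : Convex ℝ C)
    (hCone : ∀ r : ℝ, 0 < r → r • C ⊆ C)
    (hInt : (interior C).Nonempty) (hIntNe : interior C ≠ univ) :
    ∃ L : CompleteLattice {A : Set (EY Y) // A = infSE C A},
      (∀ A B : {A : Set (EY Y) // A = infSE C A},
        L.le A B ↔ upCloE C (B : Set (EY Y)) ⊆ upCloE C (A : Set (EY Y))) ∧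
      ∀ 𝒜 : Set {A : Set (EY Y) // A = infSE C A}, 𝒜.Nonempty →
        ((L.sInf 𝒜 : {A : Set (EY Y) // A = infSE C A}) : Set (EY Y)) =
          infSE C (⋃ A ∈ 𝒜, (A : Set (EY Y))) :=
  stmt_12_general C hC hCone hInt
end
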